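/- Let P₀, P₁ be Borel probability measures supported on a bounded set Z ⊂ ℝ^m, and suppose d_sig(P₀,P₁) < ε for some ε > 0. Then there exist constants c₁, c₂ > 0, not depending on ε or on the multi-index, such that for every multi-index r = (r₁,…,r_m) ∈ ℕ₀^m, |∫ z^r dP₀(z) − ∫ z^r dP₁(z)| < c₁ · c₂^{|r|₁} · ε, where z^r = z₁^{r₁}⋯z_m^{r_m} and |r|₁ = r₁ + ⋯ + r_m. -/

import Mathlib

open MeasureTheory

/-- The sigmoid function `σ(t) = 1/(1 + e^{-t})`. -/
noncomputable def sigmoid (t : ℝ) : ℝ := 1 / (1 + Real.exp (-t))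

/-- The sigmoid IPM between two measures on `ℝ^m`. -/
noncomputable def sigmoidIPM {m : ℕ} (P₀ P₁ : Measure (Fin m → ℝ)) : ℝ :=
  ⨆ p : (Fin m → ℝ) × ℝ,
    |(∫ z, sigmoid ((∑ i, p.1 i * z i) + p.2) ∂P₀) -
      ∫ z, sigmoid ((∑ i, p.1 i * z i) + p.2) ∂P₁|

/-!
Polarization writes `n! z^r`, with `n = |r|₁`, as a signed sum of `2^n` powers `L(z)^n` of linear
forms with `|L| ≤ n ρ` on `Z`. For a real variable `T` with values in `[-B, B]`,
`T^n - (-B)^n = ∫_{-B}^{B} n s^{n-1} 1[s < T] ds` and `1[s < T] = lim_k σ(k (T - s))` for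
`s ≠ T`, so Fubini and dominated convergence bound the difference of the `n`-th moments of `T` under
`P₀, P₁` by `2 n B^n d_sig(P₀, P₁)`. The factorial is absorbed by `n^n ≤ n! e^n`.
-/

open Filter Topology
open scoped Nat

lemma sigmoid_eq_real_sigmoid : sigmoid = Real.sigmoid :=
  funext fun _ => one_div _

namespace Real

lemma abs_sigmoid_le_one (t : ℝ) : |sigmoid t| ≤ 1 :=
  abs_le.2 ⟨by linarith [sigmoid_nonneg t], sigmoid_le_one t⟩

lemma tendsto_sigmoid_natCast_mul_of_pos {x : ℝ} (hx : 0 < x) :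
    Tendsto (fun k : ℕ => sigmoid (k * x)) atTop (𝓝 1) :=
  tendsto_sigmoid_atTop.comp (tendsto_natCast_atTop_atTop.atTop_mul_const hx)

lemma tendsto_sigmoid_natCast_mul_of_neg {x : ℝ} (hx : x < 0) :
    Tendsto (fun k : ℕ => sigmoid (k * x)) atTop (𝓝 0) :=
  tendsto_sigmoid_atBot.comp (tendsto_natCast_atTop_atTop.atTop_mul_const_of_neg hx)

end Real

section SmoothedLayerCake

open Set

theorem tendsto_setIntegral_mul_sigmoid {g : ℝ → ℝ} {a b t : ℝ}
    (hg : IntegrableOn g (Ioc a b)) (hat : a ≤ t) (htb : t ≤ b) :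
    Tendsto (fun k : ℕ => ∫ s in Ioc a b, g s * Real.sigmoid (k * (t - s))) atTop
      (𝓝 (∫ s in a..t, g s)) := by
  have hlim : ∫ s in Ioc a b, (Iic t).indicator g s = ∫ s in a..t, g s := by
    rw [integral_indicator measurableSet_Iic, Measure.restrict_restrict measurableSet_Iic,
      Iic_inter_Ioc_of_le htb, intervalIntegral.integral_of_le hat]
  rw [← hlim]
  refine tendsto_integral_of_dominated_convergence (fun s => ‖g s‖)
    (fun k => hg.aestronglyMeasurable.mul (by fun_prop : Continuous _).aestronglyMeasurable)
    hg.norm (fun k => Eventually.of_forall fun s => ?_) ?_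
  · rw [norm_mul]
    exact mul_le_of_le_one_right (norm_nonneg _) (Real.abs_sigmoid_le_one _)
  · have hne : ∀ᵐ s ∂(volume.restrict (Ioc a b)), s ≠ t :=
      ae_restrict_of_ae (compl_mem_ae_iff.2 (measure_singleton t))
    filter_upwards [hne] with s hs
    rcases hs.lt_or_gt with hst | hts
    · rw [indicator_of_mem (show s ∈ Iic t from hst.le)]
      simpa using (Real.tendsto_sigmoid_natCast_mul_of_pos (sub_pos.2 hst)).const_mul (g s)
    · rw [indicator_of_notMem (show s ∉ Iic t from not_le.2 hts)]
      simpa using (Real.tendsto_sigmoid_natCast_mul_of_neg (sub_neg.2 hts)).const_mul (g s)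

variable {X : Type*} [MeasurableSpace X] {T : X → ℝ} {g : ℝ → ℝ} {a b : ℝ}

def SigmoidClose (P₀ P₁ : Measure X) (T : X → ℝ) (ε : ℝ) : Prop :=
  ∀ w c : ℝ, |∫ x, Real.sigmoid (w * T x + c) ∂P₀ - ∫ x, Real.sigmoid (w * T x + c) ∂P₁| ≤ ε

lemma SigmoidClose.nonneg {P₀ P₁ : Measure X} {ε : ℝ} (h : SigmoidClose P₀ P₁ T ε) : 0 ≤ ε :=
  (abs_nonneg _).trans (h 0 0)

lemma integrable_mul_sigmoid_prod (P : Measure X) [IsFiniteMeasure P] (hT : Measurable T)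
    (hg : IntegrableOn g (Ioc a b)) (k : ℕ) :
    Integrable (fun q : X × ℝ => g q.2 * Real.sigmoid (k * (T q.1 - q.2)))
      (P.prod (volume.restrict (Ioc a b))) := by
  refine (hg.comp_snd P).mono ?_ (Eventually.of_forall fun q => ?_)
  · have hσ : Measurable fun q : X × ℝ => Real.sigmoid (k * (T q.1 - q.2)) := by fun_prop
    exact hg.aestronglyMeasurable.comp_snd.mul hσ.aestronglyMeasurable
  · rw [norm_mul]
    exact mul_le_of_le_one_right (norm_nonneg _) (Real.abs_sigmoid_le_one _)

lemma tendsto_integral_setIntegral_mul_sigmoid (P : Measure X) [IsFiniteMeasure P]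
    (hT : Measurable T) (hTab : ∀ᵐ x ∂P, T x ∈ Icc a b) (hg : IntegrableOn g (Ioc a b)) :
    Tendsto (fun k : ℕ => ∫ x, (∫ s in Ioc a b, g s * Real.sigmoid (k * (T x - s))) ∂P)
      atTop (𝓝 (∫ x, (∫ s in a..T x, g s) ∂P)) := by
  refine tendsto_integral_of_dominated_convergence (fun _ => ∫ s in Ioc a b, ‖g s‖)
    (fun k => (integrable_mul_sigmoid_prod P hT hg k).integral_prod_left.aestronglyMeasurable)
    (integrable_const _) (fun k => Eventually.of_forall fun x => ?_) ?_
  · refine (norm_integral_le_integral_norm _).trans (integral_mono_of_nonneg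
      (Eventually.of_forall fun _ => norm_nonneg _) hg.norm (Eventually.of_forall fun s => ?_))
    dsimp only
    rw [norm_mul]
    exact mul_le_of_le_one_right (norm_nonneg _) (Real.abs_sigmoid_le_one _)
  · filter_upwards [hTab] with x hx
    exact tendsto_setIntegral_mul_sigmoid hg hx.1 hx.2

variable {P₀ P₁ : Measure X} [IsFiniteMeasure P₀] [IsFiniteMeasure P₁] {ε : ℝ}

lemma abs_integral_setIntegral_mul_sigmoid_sub_le (hT : Measurable T)
    (hg : IntegrableOn g (Ioc a b)) (hε : SigmoidClose P₀ P₁ T ε) (k : ℕ) :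
    |∫ x, (∫ s in Ioc a b, g s * Real.sigmoid (k * (T x - s))) ∂P₀ -
      ∫ x, (∫ s in Ioc a b, g s * Real.sigmoid (k * (T x - s))) ∂P₁| ≤
      ε * ∫ s in Ioc a b, |g s| := by
  have hswap : ∀ (P : Measure X) [IsFiniteMeasure P],
      ∫ x, (∫ s in Ioc a b, g s * Real.sigmoid (k * (T x - s))) ∂P =
        ∫ s in Ioc a b, g s * ∫ x, Real.sigmoid (k * T x + -(k * s)) ∂P := by
    intro P _
    rw [integral_integral_swap (integrable_mul_sigmoid_prod P hT hg k)]
    refine integral_congr_ae (Eventually.of_forall fun s => ?_)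
    simp only [← integral_const_mul, sub_eq_add_neg, mul_add, mul_neg]
  have hint : ∀ (P : Measure X) [IsFiniteMeasure P],
      Integrable (fun s => g s * ∫ x, Real.sigmoid (k * T x + -(k * s)) ∂P)
        (volume.restrict (Ioc a b)) := by
    intro P _
    refine (integrable_mul_sigmoid_prod P hT hg k).integral_prod_right.congr
      (Eventually.of_forall fun s => ?_)
    simp only [← integral_const_mul, sub_eq_add_neg, mul_add, mul_neg]
  rw [hswap, hswap, ← integral_sub (hint P₀) (hint P₁), mul_comm ε,
    ← integral_mul_const ε fun s => |g s|, ← Real.norm_eq_abs]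
  refine norm_integral_le_of_norm_le (hg.abs.mul_const ε) (Eventually.of_forall fun s => ?_)
  rw [← mul_sub, norm_mul]
  exact mul_le_mul_of_nonneg_left (hε _ _) (abs_nonneg _)

theorem abs_integral_intervalIntegral_sub_le_of_sigmoidClose (hT : Measurable T)
    (h₀ : ∀ᵐ x ∂P₀, T x ∈ Icc a b) (h₁ : ∀ᵐ x ∂P₁, T x ∈ Icc a b)
    (hg : IntegrableOn g (Ioc a b)) (hε : SigmoidClose P₀ P₁ T ε) :
    |∫ x, (∫ s in a..T x, g s) ∂P₀ - ∫ x, (∫ s in a..T x, g s) ∂P₁| ≤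
      ε * ∫ s in Ioc a b, |g s| :=
  le_of_tendsto (((tendsto_integral_setIntegral_mul_sigmoid P₀ hT h₀ hg).sub
      (tendsto_integral_setIntegral_mul_sigmoid P₁ hT h₁ hg)).abs)
    (Eventually.of_forall (abs_integral_setIntegral_mul_sigmoid_sub_le hT hg hε))

end SmoothedLayerCake

section Moments

open Set

variable {X : Type*} [MeasurableSpace X] {T : X → ℝ} {B : ℝ}

lemma integrable_pow_of_ae_abs_le {P : Measure X} [IsFiniteMeasure P] (hT : Measurable T)
    (hTB : ∀ᵐ x ∂P, |T x| ≤ B) (n : ℕ) : Integrable (fun x => T x ^ n) P :=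
  .of_bound (hT.pow_const n).aestronglyMeasurable (B ^ n) <| hTB.mono fun x hx => by
    rw [norm_pow, Real.norm_eq_abs]
    exact pow_le_pow_left₀ (abs_nonneg _) hx n

lemma integral_intervalIntegral_pow_eq {P : Measure X} [IsProbabilityMeasure P]
    (hT : Measurable T) (hTB : ∀ᵐ x ∂P, |T x| ≤ B) (n : ℕ) :
    ∫ x, (∫ s in -B..T x, ((n : ℝ) + 1) * s ^ n) ∂P =
      ∫ x, T x ^ (n + 1) ∂P - (-B) ^ (n + 1) := by
  have hFTC : ∀ t : ℝ,
      ∫ s in -B..t, ((n : ℝ) + 1) * s ^ n = t ^ (n + 1) - (-B) ^ (n + 1) := by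
    intro t
    rw [intervalIntegral.integral_const_mul, integral_pow]
    field_simp
  simp_rw [hFTC]
  rw [integral_sub (integrable_pow_of_ae_abs_le hT hTB _) (integrable_const _), integral_const,
    probReal_univ, one_smul]

lemma setIntegral_abs_natCast_add_one_mul_pow_le (hB : 0 ≤ B) (n : ℕ) :
    ∫ s in Ioc (-B) B, |((n : ℝ) + 1) * s ^ n| ≤ 2 * (n + 1) * B ^ (n + 1) := by
  calc ∫ s in Ioc (-B) B, |((n : ℝ) + 1) * s ^ n|
      ≤ ∫ _ in Ioc (-B) B, ((n : ℝ) + 1) * B ^ n := by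
        refine setIntegral_mono_on ?_ (integrable_const _) measurableSet_Ioc fun s hs => ?_
        · exact Continuous.integrableOn_Ioc (by fun_prop)
        · rw [abs_mul, abs_pow, abs_of_nonneg (by positivity : (0 : ℝ) ≤ n + 1)]
          gcongr
          exact abs_le.2 ⟨hs.1.le, hs.2⟩
    _ = 2 * (n + 1) * B ^ (n + 1) := by
        rw [setIntegral_const, Measure.real, Real.volume_Ioc, ENNReal.toReal_ofReal (by linarith),
          smul_eq_mul]
        ring

variable {P₀ P₁ : Measure X} [IsProbabilityMeasure P₀] [IsProbabilityMeasure P₁] {ε : ℝ}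

theorem abs_integral_pow_sub_le_of_sigmoidClose (hT : Measurable T)
    (h₀ : ∀ᵐ x ∂P₀, |T x| ≤ B) (h₁ : ∀ᵐ x ∂P₁, |T x| ≤ B)
    (hε : SigmoidClose P₀ P₁ T ε) (n : ℕ) :
    |∫ x, T x ^ n ∂P₀ - ∫ x, T x ^ n ∂P₁| ≤ 2 * n * B ^ n * ε := by
  cases n with
  | zero => simp
  | succ n =>
    have hB : 0 ≤ B := by
      obtain ⟨x, hx⟩ := h₀.exists
      exact (abs_nonneg _).trans hx
    have hIcc : ∀ P : Measure X, (∀ᵐ x ∂P, |T x| ≤ B) → ∀ᵐ x ∂P, T x ∈ Icc (-B) B :=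
      fun _ h => h.mono fun _ hx => abs_le.1 hx
    have hg : IntegrableOn (fun s : ℝ => ((n : ℝ) + 1) * s ^ n) (Ioc (-B) B) :=
      Continuous.integrableOn_Ioc (by fun_prop)
    calc |∫ x, T x ^ (n + 1) ∂P₀ - ∫ x, T x ^ (n + 1) ∂P₁|
        = |∫ x, (∫ s in -B..T x, ((n : ℝ) + 1) * s ^ n) ∂P₀ -
            ∫ x, (∫ s in -B..T x, ((n : ℝ) + 1) * s ^ n) ∂P₁| := by
          rw [integral_intervalIntegral_pow_eq hT h₀, integral_intervalIntegral_pow_eq hT h₁,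
            sub_sub_sub_cancel_right]
      _ ≤ ε * ∫ s in Ioc (-B) B, |((n : ℝ) + 1) * s ^ n| :=
          abs_integral_intervalIntegral_sub_le_of_sigmoidClose hT (hIcc _ h₀) (hIcc _ h₁) hg hε
      _ ≤ ε * (2 * (n + 1) * B ^ (n + 1)) :=
          mul_le_mul_of_nonneg_left (setIntegral_abs_natCast_add_one_mul_pow_le hB n) hε.nonneg
      _ = 2 * ↑(n + 1) * B ^ (n + 1) * ε := by push_cast; ring

end Moments

section Polarization

open Finset

variable {ι R : Type*} [Fintype ι] [DecidableEq ι] [CommRing R]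

lemma sum_ite_subset_neg_one_pow_card_compl (A : Finset ι) :
    ∑ S : Finset ι, (if A ⊆ S then (-1 : R) ^ #Sᶜ else 0) = if A = univ then 1 else 0 := by
  have hcompl : ∀ S : Finset ι,
      ∏ i ∈ Sᶜ, (if i ∈ A then (0 : R) else -1) = if A ⊆ S then (-1) ^ #Sᶜ else 0 := by
    intro S
    rw [← prod_congr rfl fun i _ => ite_not (i ∈ A) (-1 : R) 0, prod_ite_zero, prod_const]
    simp [subset_iff, not_imp_not]
  calc ∑ S : Finset ι, (if A ⊆ S then (-1 : R) ^ #Sᶜ else 0)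
      = ∑ S : Finset ι, (∏ _ ∈ S, (1 : R)) * ∏ i ∈ univ \ S, (if i ∈ A then 0 else -1) := by
        congr 1 with S
        rw [prod_const_one, one_mul, ← compl_eq_univ_sdiff, hcompl]
    _ = ∏ i, (1 + if i ∈ A then (0 : R) else -1) := by rw [prod_add, powerset_univ]
    _ = ∏ i, (if i ∈ A then (1 : R) else 0) := by
        congr 1 with i
        split_ifs <;> simp_all
    _ = if A = univ then 1 else 0 := by simp_rw [Fintype.prod_boole, eq_univ_iff_forall]

lemma pow_sum_eq_sum_ite_image_subset (x : ι → R) (S : Finset ι) :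
    (∑ j ∈ S, x j) ^ Fintype.card ι =
      ∑ p : ι → ι, if univ.image p ⊆ S then ∏ i, x (p i) else 0 := by
  rw [← card_univ, ← prod_const, prod_univ_sum, ← sum_filter]
  congr 1
  ext p
  simp [Fintype.mem_piFinset, subset_iff]

lemma sum_ite_surjective_eq_sum_perm (f : (ι → ι) → R) :
    ∑ p : ι → ι, (if Function.Surjective p then f p else 0) = ∑ σ : Equiv.Perm ι, f σ := by
  rw [← sum_filter]
  symm
  refine sum_bij (fun σ _ => ⇑σ) (fun σ _ => by simpa using σ.surjective)
    (fun σ _ τ _ h => DFunLike.coe_injective h) (fun p hp => ?_) (fun _ _ => rfl)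
  have hsurj : Function.Surjective p := (mem_filter.1 hp).2
  exact ⟨.ofBijective p ⟨Finite.injective_iff_surjective.2 hsurj, hsurj⟩, mem_univ _, rfl⟩

theorem factorial_card_mul_prod_eq_sum_neg_one_pow_mul_pow (x : ι → R) :
    (Fintype.card ι)! * ∏ j, x j =
      ∑ S : Finset ι, (-1) ^ #Sᶜ * (∑ j ∈ S, x j) ^ Fintype.card ι := by
  calc (Fintype.card ι)! * ∏ j, x j
      = ∑ σ : Equiv.Perm ι, ∏ i, x (σ i) := by
        simp [Equiv.prod_comp, Fintype.card_perm]
    _ = ∑ p : ι → ι, (∏ i, x (p i)) * if univ.image p = univ then 1 else 0 := by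
        rw [← sum_ite_surjective_eq_sum_perm fun p => ∏ i, x (p i)]
        congr 1 with p
        by_cases hp : Function.Surjective p <;>
          simp [hp, ← coe_eq_univ, coe_image, Set.range_eq_univ]
    _ = ∑ S : Finset ι, (-1) ^ #Sᶜ * (∑ j ∈ S, x j) ^ Fintype.card ι := by
        simp_rw [← sum_ite_subset_neg_one_pow_card_compl, pow_sum_eq_sum_ite_image_subset,
          mul_sum]
        rw [sum_comm]
        congr 1 with S
        congr 1 with p
        split_ifs <;> ring

/-- Each variable `z i` is listed `r i` times, as the coordinates `⟨i, _⟩` of the index type. -/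
theorem factorial_mul_prod_pow_eq_sum_neg_one_pow_mul_pow {κ : Type*} [Fintype κ]
    [DecidableEq κ] (z : κ → R) (r : κ → ℕ) :
    ((∑ i, r i)! : R) * ∏ i, z i ^ r i =
      ∑ S : Finset ((i : κ) × Fin (r i)), (-1) ^ #Sᶜ * (∑ j ∈ S, z j.1) ^ (∑ i, r i) := by
  simpa [Fintype.prod_sigma] using
    factorial_card_mul_prod_eq_sum_neg_one_pow_mul_pow fun j : (i : κ) × Fin (r i) => z j.1

end Polarization

lemma two_pow_mul_natCast_mul_pow_le_factorial_mul {ρ : ℝ} (hρ : 0 ≤ ρ) (n : ℕ) :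
    2 ^ n * (2 * n * (n * ρ) ^ n) ≤ n ! * (2 * (4 * Real.exp 1 * ρ) ^ n) := by
  have hexp : (n : ℝ) ^ n ≤ n ! * Real.exp 1 ^ n := by
    have h := Real.pow_div_factorial_le_exp _ (Nat.cast_nonneg n) n
    rwa [div_le_iff₀ (by positivity), ← Real.exp_one_pow, mul_comm] at h
  calc 2 ^ n * (2 * n * (n * ρ) ^ n) = 2 * (2 ^ n * n) * (n : ℝ) ^ n * ρ ^ n := by ring
    _ ≤ 2 * (2 ^ n * 2 ^ n) * (n ! * Real.exp 1 ^ n) * ρ ^ n := by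
        gcongr
        exact_mod_cast Nat.lt_two_pow_self.le
    _ = n ! * (2 * (4 * Real.exp 1 * ρ) ^ n) := by
        rw [mul_pow, mul_pow, show (4 : ℝ) ^ n = 2 ^ n * 2 ^ n by rw [← mul_pow]; norm_num]
        ring

section Monomials

open Finset

variable {κ : Type*} [Fintype κ] {r : κ → ℕ}

lemma abs_sum_sigma_fst_le {z : κ → ℝ} {ρ : ℝ} (hz : ∀ i, |z i| ≤ ρ)
    (S : Finset ((i : κ) × Fin (r i))) : |∑ j ∈ S, z j.1| ≤ (∑ i, r i) * ρ := by
  calc |∑ j ∈ S, z j.1| ≤ ∑ j ∈ S, |z j.1| := abs_sum_le_sum_abs _ _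
    _ ≤ ∑ j : (i : κ) × Fin (r i), |z j.1| := sum_le_univ_sum_of_nonneg fun _ => abs_nonneg _
    _ = ∑ i, r i * |z i| := by simp [Fintype.sum_sigma]
    _ ≤ ∑ i, r i * ρ := by gcongr with i; exact hz i
    _ = (∑ i, r i) * ρ := by push_cast [sum_mul]; rfl

lemma factorial_mul_integral_prod_pow_eq [DecidableEq κ] {P : Measure (κ → ℝ)} [IsFiniteMeasure P]
    {ρ : ℝ} (h : ∀ᵐ z ∂P, ∀ i, |z i| ≤ ρ) :
    ((∑ i, r i)! : ℝ) * ∫ z, ∏ i, z i ^ r i ∂P =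
      ∑ S : Finset ((i : κ) × Fin (r i)), (-1) ^ #Sᶜ * ∫ z, (∑ j ∈ S, z j.1) ^ (∑ i, r i) ∂P := by
  simp_rw [← integral_const_mul, factorial_mul_prod_pow_eq_sum_neg_one_pow_mul_pow]
  exact integral_finsetSum _ fun S _ => (integrable_pow_of_ae_abs_le (by fun_prop)
    (h.mono fun _ hz => abs_sum_sigma_fst_le hz S) _).const_mul _

end Monomials

section SigmoidIPM

open Finset

variable {m : ℕ} {P₀ P₁ : Measure (Fin m → ℝ)}

lemma sigmoidClose_of_sigmoidIPM_le [IsFiniteMeasure P₀] [IsFiniteMeasure P₁] {ε : ℝ}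
    (hd : sigmoidIPM P₀ P₁ ≤ ε) (θ : Fin m → ℝ) :
    SigmoidClose P₀ P₁ (fun z => ∑ i, θ i * z i) ε := by
  intro w c
  have habs : ∀ (P : Measure (Fin m → ℝ)) [IsFiniteMeasure P] (f : (Fin m → ℝ) → ℝ),
      |∫ z, sigmoid (f z) ∂P| ≤ P.real Set.univ := fun P _ f => by
    simpa [sigmoid_eq_real_sigmoid] using norm_integral_le_of_norm_le_const (μ := P) (C := 1)
      (f := fun z => Real.sigmoid (f z))
      (Eventually.of_forall fun z => (Real.norm_eq_abs _).trans_le (Real.abs_sigmoid_le_one _))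
  have hw : ∀ z : Fin m → ℝ, w * ∑ i, θ i * z i = ∑ i, (w * θ i) * z i := fun z => by
    rw [mul_sum]
    simp_rw [mul_assoc]
  simp_rw [hw, ← sigmoid_eq_real_sigmoid]
  refine le_trans (le_ciSup (f := fun p : (Fin m → ℝ) × ℝ =>
      |(∫ z, sigmoid ((∑ i, p.1 i * z i) + p.2) ∂P₀) -
        ∫ z, sigmoid ((∑ i, p.1 i * z i) + p.2) ∂P₁|)
    ⟨P₀.real Set.univ + P₁.real Set.univ, ?_⟩ (fun i => w * θ i, c)) hd
  rintro _ ⟨p, rfl⟩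
  exact (abs_sub _ _).trans (add_le_add (habs P₀ _) (habs P₁ _))

lemma sigmoidClose_sum_sigma_fst_of_sigmoidIPM_le [IsFiniteMeasure P₀] [IsFiniteMeasure P₁]
    {ε : ℝ} (hd : sigmoidIPM P₀ P₁ ≤ ε) {r : Fin m → ℕ} (S : Finset ((i : Fin m) × Fin (r i))) :
    SigmoidClose P₀ P₁ (fun z => ∑ j ∈ S, z j.1) ε := by
  have hlin : (fun z : Fin m → ℝ => ∑ j ∈ S, z j.1) =
      fun z => ∑ i, (#{j ∈ S | j.1 = i} : ℝ) * z i := funext fun z => by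
    simp only [← sum_fiberwise' S (·.1) z, sum_const, nsmul_eq_mul]
  exact hlin ▸ sigmoidClose_of_sigmoidIPM_le hd _

theorem abs_integral_monomial_sub_le [IsProbabilityMeasure P₀] [IsProbabilityMeasure P₁]
    {ρ ε : ℝ} (hρ : 0 ≤ ρ) (h₀ : ∀ᵐ z ∂P₀, ∀ i, |z i| ≤ ρ)
    (h₁ : ∀ᵐ z ∂P₁, ∀ i, |z i| ≤ ρ) (hd : sigmoidIPM P₀ P₁ ≤ ε) (r : Fin m → ℕ) :
    |∫ z, ∏ i, z i ^ r i ∂P₀ - ∫ z, ∏ i, z i ^ r i ∂P₁| ≤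
      2 * (4 * Real.exp 1 * ρ) ^ (∑ i, r i) * ε := by
  set n := ∑ i, r i
  have hB : ∀ S : Finset ((i : Fin m) × Fin (r i)), ∀ P : Measure (Fin m → ℝ),
      (∀ᵐ z ∂P, ∀ i, |z i| ≤ ρ) → ∀ᵐ z ∂P, |∑ j ∈ S, z j.1| ≤ n * ρ :=
    fun S _ h => h.mono fun _ hz => abs_sum_sigma_fst_le hz S
  have hε : 0 ≤ ε := (sigmoidClose_of_sigmoidIPM_le hd 0).nonneg
  have hsum : (n ! : ℝ) * |∫ z, ∏ i, z i ^ r i ∂P₀ - ∫ z, ∏ i, z i ^ r i ∂P₁| ≤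
      n ! * (2 * (4 * Real.exp 1 * ρ) ^ n * ε) := by
    calc (n ! : ℝ) * |∫ z, ∏ i, z i ^ r i ∂P₀ - ∫ z, ∏ i, z i ^ r i ∂P₁|
        = |∑ S : Finset ((i : Fin m) × Fin (r i)), (-1) ^ #Sᶜ *
            (∫ z, (∑ j ∈ S, z j.1) ^ n ∂P₀ - ∫ z, (∑ j ∈ S, z j.1) ^ n ∂P₁)| := by
          rw [← abs_of_nonneg (by positivity : (0 : ℝ) ≤ n !), ← abs_mul, mul_sub,
            factorial_mul_integral_prod_pow_eq h₀, factorial_mul_integral_prod_pow_eq h₁,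
            ← sum_sub_distrib]
          simp_rw [mul_sub]
          rfl
      _ ≤ ∑ _S : Finset ((i : Fin m) × Fin (r i)), 2 * n * (n * ρ) ^ n * ε := by
          refine (abs_sum_le_sum_abs _ _).trans (sum_le_sum fun S _ => ?_)
          rw [abs_mul, abs_pow, abs_neg, abs_one, one_pow, one_mul]
          exact abs_integral_pow_sub_le_of_sigmoidClose (by fun_prop) (hB S _ h₀) (hB S _ h₁)
            (sigmoidClose_sum_sigma_fst_of_sigmoidIPM_le hd S) n
      _ = 2 ^ n * (2 * n * (n * ρ) ^ n) * ε := by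
          simp [Fintype.card_finset, n, mul_assoc]
      _ ≤ n ! * (2 * (4 * Real.exp 1 * ρ) ^ n) * ε :=
          mul_le_mul_of_nonneg_right (two_pow_mul_natCast_mul_pow_le_factorial_mul hρ n) hε
      _ = n ! * (2 * (4 * Real.exp 1 * ρ) ^ n * ε) := by ring
  exact le_of_mul_le_mul_left hsum (by positivity)

end SigmoidIPM

/-- for a bounded set `Z ⊂ ℝ^m` there exist constants `c₁, c₂ > 0`, not
depending on `ε` or the multi-index, such that for all Borel probability measures
`P₀, P₁` supported on `Z` with `d_sig(P₀,P₁) < ε`, every moment difference satisfies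
`|∫ z^r dP₀ - ∫ z^r dP₁| < c₁ c₂^{|r|₁} ε`. -/
theorem moment_bound_of_sigmoidIPM_lt {m : ℕ}
    (Z : Set (Fin m → ℝ)) (hZ : Bornology.IsBounded Z) :
    ∃ c₁ c₂ : ℝ, 0 < c₁ ∧ 0 < c₂ ∧
      ∀ (P₀ P₁ : Measure (Fin m → ℝ)),
        IsProbabilityMeasure P₀ → IsProbabilityMeasure P₁ →
        P₀ Zᶜ = 0 → P₁ Zᶜ = 0 →
        ∀ ε : ℝ, 0 < ε → sigmoidIPM P₀ P₁ < ε →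
          ∀ r : Fin m → ℕ,
            |(∫ z, ∏ i, z i ^ r i ∂P₀) - ∫ z, ∏ i, z i ^ r i ∂P₁| <
              c₁ * c₂ ^ (∑ i, r i) * ε := by
  obtain ⟨R, hR, hZR⟩ := hZ.exists_pos_norm_le
  have hcoord : ∀ P : Measure (Fin m → ℝ), P Zᶜ = 0 → ∀ᵐ z ∂P, ∀ i, |z i| ≤ R :=
    fun P hP => (show ∀ᵐ z ∂P, z ∈ Z from mem_ae_iff.2 hP).mono fun z hz i =>
      (norm_le_pi_norm z i).trans (hZR z hz)
  refine ⟨3, 4 * Real.exp 1 * R, by norm_num, by positivity,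
    fun P₀ P₁ _ _ h₀ h₁ ε hε hd r => ?_⟩
  have hpos : 0 < (4 * Real.exp 1 * R) ^ (∑ i, r i) * ε := by positivity
  calc _ ≤ 2 * (4 * Real.exp 1 * R) ^ (∑ i, r i) * ε :=
        abs_integral_monomial_sub_le hR.le (hcoord P₀ h₀) (hcoord P₁ h₁) hd.le r
    _ < 3 * (4 * Real.exp 1 * R) ^ (∑ i, r i) * ε := by linarith
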